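/- (Robbins's inequality) For every positive integer n, 1/(12n + 1) < r_n < 1/(12n), where r_n = ln( n!·e^n / (√(2πn)·n^n) ). -/

import Mathlib

open Real Nat

/-- `r_n = ln ( n! eⁿ / (√(2πn) nⁿ) )`, the logarithmic error in Stirling's formula. -/
noncomputable def stirlingError (n : ℕ) : ℝ :=
  Real.log ((n ! : ℝ) * Real.exp n / (Real.sqrt (2 * π * n) * (n : ℝ) ^ n))

open Filter Topology

lemma stirlingError_eq (n : ℕ) (hn : n ≠ 0) :
    stirlingError n = Real.log (Stirling.stirlingSeq n) - Real.log (Real.sqrt π) := by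
  obtain ⟨m, rfl⟩ := Nat.exists_eq_succ_of_ne_zero hn
  set n := m + 1 with hmn
  have hn0 : (0:ℝ) < (n:ℝ) := by exact_mod_cast Nat.succ_pos m
  rw [stirlingError, ← Real.log_div (Stirling.stirlingSeq'_pos m).ne' (by positivity)]
  congr 1
  rw [Stirling.stirlingSeq]
  have h1 : Real.sqrt (2 * π * n) = Real.sqrt (2 * n) * Real.sqrt π := by
    rw [← Real.sqrt_mul (by positivity)]
    ring_nf
  have h2 : ((n : ℝ) / Real.exp 1) ^ n = (n : ℝ) ^ n / Real.exp n := by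
    rw [div_pow, Real.exp_one_pow]
  rw [h1, h2]
  have he : (0:ℝ) < Real.exp (n:ℝ) := Real.exp_pos _
  have hs : (0:ℝ) < Real.sqrt (2 * n) := Real.sqrt_pos.mpr (by positivity)
  have hp : (0:ℝ) < Real.sqrt π := Real.sqrt_pos.mpr Real.pi_pos
  have hpn : (0:ℝ) < (n:ℝ) ^ n := by positivity
  rw [div_div, div_eq_div_iff (mul_pos (mul_pos hs hp) hpn).ne'
    (mul_pos (mul_pos hs (div_pos hpn he)) hp).ne']
  have hcan : Real.exp (n:ℝ) * ((n:ℝ) ^ n / Real.exp (n:ℝ)) = (n:ℝ) ^ n := by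
    rw [mul_comm, div_mul_cancel₀ _ he.ne']
  linear_combination ((n ! : ℝ)) * Real.sqrt (2 * (n:ℝ)) * Real.sqrt π * hcan

lemma stirlingError_diff_hasSum (m : ℕ) :
    HasSum (fun k : ℕ => (1 : ℝ) / (2 * ↑(k + 1) + 1) * ((1 / (2 * ↑(m + 1) + 1)) ^ 2) ^ (k + 1))
      (stirlingError (m + 1) - stirlingError (m + 2)) := by
  have h := Stirling.log_stirlingSeq_diff_hasSum m
  rw [stirlingError_eq _ (Nat.succ_ne_zero m), stirlingError_eq _ (Nat.succ_ne_zero (m+1)),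
    sub_sub_sub_cancel_right]
  exact h

lemma stirlingError_diff_lower (m : ℕ) :
    1 / (12 * ((m:ℝ) + 1) + 1) - 1 / (12 * ((m:ℝ) + 2) + 1) <
      stirlingError (m + 1) - stirlingError (m + 2) := by
  have h0 := le_hasSum (stirlingError_diff_hasSum m) 0
    (fun i _ => by positivity)
  set N : ℝ := (m : ℝ) with hN
  have hN0 : (0 : ℝ) ≤ N := Nat.cast_nonneg m
  have h3 : (0:ℝ) < 2 * (N + 1) + 1 := by linarith
  have h0' : 1 / (3 * (2 * (N + 1) + 1) ^ 2) ≤ stirlingError (m + 1) - stirlingError (m + 2) := by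
    refine le_trans (le_of_eq ?_) h0
    push_cast
    rw [pow_one]
    field_simp
    ring
  have h1 : (0:ℝ) < 12 * (N + 1) + 1 := by linarith
  have h2 : (0:ℝ) < 12 * (N + 2) + 1 := by linarith
  have key : 1 / (12 * (N + 1) + 1) - 1 / (12 * (N + 2) + 1) <
      1 / (3 * (2 * (N + 1) + 1) ^ 2) := by
    rw [div_sub_div _ _ h1.ne' h2.ne', div_lt_div_iff₀ (by positivity) (by positivity)]
    nlinarith [sq_nonneg N, hN0]
  linarith

lemma stirlingError_diff_upper (m : ℕ) :
    stirlingError (m + 1) - stirlingError (m + 2) <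
      1 / (12 * ((m:ℝ) + 1)) - 1 / (12 * ((m:ℝ) + 2)) := by
  have h := stirlingError_diff_hasSum m
  set x : ℝ := (1 / (2 * (↑(m + 1) : ℝ) + 1)) ^ 2 with hx
  have hxpos : 0 < x := by positivity
  have hxlt : x < 1 := by
    rw [hx, one_div, inv_pow]
    refine inv_lt_one_of_one_lt₀ (one_lt_pow₀ ?_ two_ne_zero)
    have : (1:ℝ) ≤ (↑(m+1) : ℝ) := by exact_mod_cast Nat.succ_le_succ (Nat.zero_le m)
    linarith
  have hg : HasSum (fun k : ℕ => (1 : ℝ) / 3 * x ^ (k + 1)) (1 / 3 * (x / (1 - x))) := by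
    have hgeo := (hasSum_geometric_of_lt_one hxpos.le hxlt).mul_left (1 / 3 * x)
    have heq : (fun k : ℕ => (1:ℝ) / 3 * x ^ (k + 1)) = fun k : ℕ => (1 / 3 * x) * x ^ k := by
      funext k
      rw [_root_.pow_succ']
      ring
    rw [heq]
    have hval : (1:ℝ) / 3 * (x / (1 - x)) = 1 / 3 * x * (1 - x)⁻¹ := by
      rw [div_eq_mul_inv]
      ring
    rw [hval]
    exact hgeo
  have hle : ∀ k : ℕ, (1 : ℝ) / (2 * ↑(k + 1) + 1) * x ^ (k + 1) ≤ 1 / 3 * x ^ (k + 1) := by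
    intro k
    apply mul_le_mul_of_nonneg_right _ (by positivity)
    apply div_le_div_of_nonneg_left one_pos.le (by norm_num)
    have : (0:ℝ) ≤ (k:ℝ) := Nat.cast_nonneg k
    push_cast
    linarith
  have hstrict : (1 : ℝ) / (2 * ((((1:ℕ) + 1 : ℕ)) : ℝ) + 1) * x ^ ((1:ℕ) + 1) <
      1 / 3 * x ^ ((1:ℕ) + 1) := by
    have hx2 : (0:ℝ) < x ^ ((1:ℕ) + 1) := pow_pos hxpos _
    apply mul_lt_mul_of_pos_right _ hx2
    norm_num
  have hlt : stirlingError (m + 1) - stirlingError (m + 2) < 1 / 3 * (x / (1 - x)) :=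
    hasSum_lt hle hstrict h hg
  have hN0 : (0 : ℝ) ≤ (m:ℝ) := Nat.cast_nonneg m
  have h4 : (0:ℝ) < (m:ℝ) + 1 := by linarith
  have h5 : (0:ℝ) < (m:ℝ) + 2 := by linarith
  have hy : (0:ℝ) < (2 * ((m:ℝ) + 1) + 1) ^ 2 := by positivity
  have hprod : (0:ℝ) < 4 * ((m:ℝ) + 1) * ((m:ℝ) + 2) := by positivity
  have hxval : x = 1 / (2 * ((m:ℝ) + 1) + 1) ^ 2 := by
    rw [hx, div_pow, one_pow]
    push_cast
    ring_nf
  have h1mx : (1:ℝ) - x = (4 * ((m:ℝ) + 1) * ((m:ℝ) + 2)) / (2 * ((m:ℝ) + 1) + 1) ^ 2 := by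
    rw [hxval]
    field_simp
    ring
  have hq : x / (1 - x) = 1 / (4 * ((m:ℝ) + 1) * ((m:ℝ) + 2)) := by
    rw [h1mx, hxval]
    rw [div_div_div_eq, one_mul]
    rw [div_eq_div_iff (by positivity) (by positivity)]
    ring
  have key : 1 / 3 * (x / (1 - x)) = 1 / (12 * ((m:ℝ) + 1)) - 1 / (12 * ((m:ℝ) + 2)) := by
    rw [hq, div_sub_div _ _ (by positivity) (by positivity)]
    rw [mul_one_div, div_eq_div_iff (by positivity) (by positivity)]
    ring
  linarith [hlt, key.symm.le]

lemma stirlingError_tendsto_zero :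
    Tendsto stirlingError atTop (𝓝 0) := by
  have hpi : (0:ℝ) < Real.sqrt π := Real.sqrt_pos.mpr Real.pi_pos
  have h1 : Tendsto (fun n => Real.log (Stirling.stirlingSeq n) - Real.log (Real.sqrt π))
      atTop (𝓝 (Real.log (Real.sqrt π) - Real.log (Real.sqrt π))) :=
    (Filter.Tendsto.log Stirling.tendsto_stirlingSeq_sqrt_pi hpi.ne').sub tendsto_const_nhds
  rw [sub_self] at h1
  refine h1.congr' ?_
  filter_upwards [eventually_ge_atTop 1] with n hn
  exact (stirlingError_eq n (by omega)).symm

/-- **Robbins's inequality**: `1/(12n+1) < r_n < 1/(12n)` for every positive integer `n`. -/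
theorem robbins_inequality (n : ℕ) (hn : 1 ≤ n) :
    1 / (12 * (n : ℝ) + 1) < stirlingError n ∧ stirlingError n < 1 / (12 * (n : ℝ)) := by
  set F : ℕ → ℝ := fun m => stirlingError (m + 1) - 1 / (12 * ((m:ℝ) + 1)) with hF
  set G : ℕ → ℝ := fun m => stirlingError (m + 1) - 1 / (12 * ((m:ℝ) + 1) + 1) with hG
  have hFmono : StrictMono F := by
    apply strictMono_nat_of_lt_succ
    intro m
    have h := stirlingError_diff_upper m
    simp only [hF]
    push_cast
    ring_nf
    ring_nf at h
    linarith
  have hGanti : StrictAnti G := by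
    apply strictAnti_nat_of_succ_lt
    intro m
    have h := stirlingError_diff_lower m
    simp only [hG]
    push_cast
    ring_nf
    ring_nf at h
    linarith
  have hE : Tendsto (fun m : ℕ => stirlingError (m + 1)) atTop (𝓝 0) :=
    stirlingError_tendsto_zero.comp (tendsto_add_atTop_nat 1)
  have hd : Tendsto (fun m : ℕ => (12 * ((m:ℝ) + 1))) atTop atTop := by
    apply Filter.Tendsto.const_mul_atTop (by norm_num : (0:ℝ) < 12)
    exact tendsto_atTop_add_const_right _ 1 tendsto_natCast_atTop_atTop
  have hFlim : Tendsto F atTop (𝓝 0) := by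
    have h2 : Tendsto (fun m : ℕ => 1 / (12 * ((m:ℝ) + 1))) atTop (𝓝 0) := by
      simpa only [one_div, Pi.inv_def] using hd.inv_tendsto_atTop
    have h3 := hE.sub h2
    rw [sub_zero] at h3
    exact h3
  have hGlim : Tendsto G atTop (𝓝 0) := by
    have h2 : Tendsto (fun m : ℕ => 1 / (12 * ((m:ℝ) + 1) + 1)) atTop (𝓝 0) := by
      simpa only [one_div, Pi.inv_def] using (tendsto_atTop_add_const_right _ 1 hd).inv_tendsto_atTop
    have h3 := hE.sub h2
    rw [sub_zero] at h3
    exact h3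
  have hFle : ∀ m, F m ≤ 0 := hFmono.monotone.ge_of_tendsto hFlim
  have hGge : ∀ m, 0 ≤ G m := hGanti.antitone.le_of_tendsto hGlim
  obtain ⟨m, rfl⟩ : ∃ m, n = m + 1 := ⟨n - 1, (Nat.succ_pred_eq_of_pos hn).symm⟩
  constructor
  · have h1 : G (m + 1) < G m := hGanti (Nat.lt_succ_self m)
    have h2 := hGge (m + 1)
    have h3 : 0 < G m := lt_of_le_of_lt h2 h1
    simp only [hG] at h3
    push_cast
    linarith
  · have h1 : F m < F (m + 1) := hFmono (Nat.lt_succ_self m)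
    have h2 := hFle (m + 1)
    have h3 : F m < 0 := lt_of_lt_of_le h1 h2
    simp only [hF] at h3
    push_cast
    linarith
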